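/- arXiv:2312.08759 — 6 statements merged into one kernel-verified Lean document; each statement's English description precedes it below -/
import Mathlib

section
/- Let G be a graph with girth at least 7 and maximum degree Δ ≥ 2. Then the clique number of the square G² equals Δ + 1. -/
/-- The square of a simple graph: two distinct vertices are adjacent iff
their distance in `G` is at most `2`. -/
def SimpleGraph.square {V : Type*} (G : SimpleGraph V) : SimpleGraph V where
  Adj u v := u ≠ v ∧ (G.Adj u v ∨ ∃ w, G.Adj u w ∧ G.Adj w v)
  symm := ⟨fun u v => by
    rintro ⟨huv, h | ⟨w, h1, h2⟩⟩
    · exact ⟨huv.symm, Or.inl h.symm⟩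
    · exact ⟨huv.symm, Or.inr ⟨w, h2.symm, h1.symm⟩⟩⟩
  loopless := ⟨fun v => by simp⟩


/-!
A vertex together with its neighbours is a clique of `G²`, so `ω(G²) ≥ Δ + 1`. Conversely,
when `G` has no cycles of length at most `6`, every clique of `G²` lies in a closed
neighbourhood `N[w]`. If the clique contains an edge `uv`, the absence of `3`- and `5`-cycles
makes every other member adjacent to `u` or to `v`, and the absence of `4`- and `5`-cycles
makes it the same endpoint for all of them. If the clique is independent in `G`, a common
neighbour `w` of two of its members is adjacent to every member, since otherwise a `4`- or
`6`-cycle through `w` appears.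
-/

open Finset

namespace SimpleGraph

variable {V : Type*} {G : SimpleGraph V}

lemma egirth_le_three {a b c : V} (hab : G.Adj a b) (hbc : G.Adj b c) (hca : G.Adj c a) :
    G.egirth ≤ 3 := by
  have hcyc : (Walk.cons hab (Walk.cons hbc (Walk.cons hca Walk.nil))).IsCycle := by
    simp [Walk.isCycle_def, Walk.isTrail_def, Sym2.eq, Sym2.rel_iff', Ne.symm, hab.ne, hbc.ne,
      hca.ne]
  simpa using egirth_le_length hcyc

lemma egirth_le_four {a b c d : V} (hab : G.Adj a b) (hbc : G.Adj b c) (hcd : G.Adj c d)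
    (hda : G.Adj d a) (hac : a ≠ c) (hbd : b ≠ d) : G.egirth ≤ 4 := by
  have hcyc :
      (Walk.cons hab (Walk.cons hbc (Walk.cons hcd (Walk.cons hda Walk.nil)))).IsCycle := by
    simp [Walk.isCycle_def, Walk.isTrail_def, Sym2.eq, Sym2.rel_iff', *, Ne.symm, hab.ne, hbc.ne,
      hcd.ne, hda.ne]
  simpa using egirth_le_length hcyc

lemma egirth_le_five {a b c d e : V} (hab : G.Adj a b) (hbc : G.Adj b c) (hcd : G.Adj c d)
    (hde : G.Adj d e) (hea : G.Adj e a)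
    (hac : a ≠ c) (hbd : b ≠ d) (hce : c ≠ e) (hda : d ≠ a) (heb : e ≠ b) : G.egirth ≤ 5 := by
  have hcyc : (Walk.cons hab (Walk.cons hbc (Walk.cons hcd (Walk.cons hde
      (Walk.cons hea Walk.nil))))).IsCycle := by
    simp [Walk.isCycle_def, Walk.isTrail_def, Sym2.eq, Sym2.rel_iff', *, Ne.symm, hab.ne, hbc.ne,
      hcd.ne, hde.ne, hea.ne]
  simpa using egirth_le_length hcyc

lemma egirth_le_six {a b c d e f : V} (hab : G.Adj a b) (hbc : G.Adj b c) (hcd : G.Adj c d)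
    (hde : G.Adj d e) (hef : G.Adj e f) (hfa : G.Adj f a)
    (hac : a ≠ c) (hbd : b ≠ d) (hce : c ≠ e) (hdf : d ≠ f) (hea : e ≠ a) (hfb : f ≠ b)
    (had : a ≠ d) (hbe : b ≠ e) (hcf : c ≠ f) : G.egirth ≤ 6 := by
  have hcyc : (Walk.cons hab (Walk.cons hbc (Walk.cons hcd (Walk.cons hde
      (Walk.cons hef (Walk.cons hfa Walk.nil)))))).IsCycle := by
    simp [Walk.isCycle_def, Walk.isTrail_def, Sym2.eq, Sym2.rel_iff', *, Ne.symm, hab.ne, hbc.ne,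
      hcd.ne, hde.ne, hef.ne, hfa.ne]
  simpa using egirth_le_length hcyc

def closedNeighborSet (G : SimpleGraph V) (v : V) : Set V := insert v (G.neighborSet v)

@[simp]
lemma mem_closedNeighborSet {v x : V} : x ∈ G.closedNeighborSet v ↔ x = v ∨ G.Adj v x := Iff.rfl

lemma neighborSet_subset_closedNeighborSet (v : V) : G.neighborSet v ⊆ G.closedNeighborSet v :=
  Set.subset_insert _ _

lemma isClique_square_closedNeighborSet (v : V) : G.square.IsClique (G.closedNeighborSet v) := by
  intro x hx y hy hxy
  refine ⟨hxy, ?_⟩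
  rcases mem_closedNeighborSet.mp hx with rfl | hx <;>
    rcases mem_closedNeighborSet.mp hy with rfl | hy
  · exact absurd rfl hxy
  · exact Or.inl hy
  · exact Or.inl hx.symm
  · exact Or.inr ⟨v, hx.symm, hy⟩

lemma Adj.adj_or_adj_of_square_adj (hg : 6 ≤ G.egirth) {u v x : V} (huv : G.Adj u v)
    (hxu : G.square.Adj x u) (hxv : G.square.Adj x v) : G.Adj u x ∨ G.Adj v x := by
  obtain ⟨hxu_ne, hxu | ⟨a, hxa, hau⟩⟩ := hxu
  · exact Or.inl hxu.symm
  obtain ⟨hxv_ne, hxv | ⟨b, hxb, hbv⟩⟩ := hxv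
  · exact Or.inr hxv.symm
  by_contra! h
  obtain rfl | hab := eq_or_ne a b
  · exact absurd (hg.trans (egirth_le_three hau huv hbv.symm)) (by norm_num)
  · have hav : a ≠ v := by rintro rfl; exact h.2 hxa.symm
    have hub : u ≠ b := by rintro rfl; exact h.1 hxb.symm
    exact absurd (hg.trans (egirth_le_five hxa hau huv hbv.symm hxb.symm hxu_ne hav hub
      hxv_ne.symm hab.symm)) (by norm_num)

lemma IsClique.subset_closedNeighborSet_of_adj (hg : 6 ≤ G.egirth) {s : Set V}
    (hs : G.square.IsClique s) {u v : V} (hu : u ∈ s) (hv : v ∈ s) (huv : G.Adj u v) :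
    s ⊆ G.closedNeighborSet u ∨ s ⊆ G.closedNeighborSet v := by
  by_contra! h
  obtain ⟨⟨x, hx, hxu⟩, ⟨y, hy, hyv⟩⟩ := And.imp Set.not_subset.mp Set.not_subset.mp h
  simp only [mem_closedNeighborSet, not_or] at hxu hyv
  obtain ⟨hxu, hux⟩ := hxu
  obtain ⟨hyv, hvy⟩ := hyv
  have hxv : x ≠ v := by rintro rfl; exact hux huv
  have hyu : y ≠ u := by rintro rfl; exact hvy huv.symm
  have hvx : G.Adj v x :=
    (huv.adj_or_adj_of_square_adj hg (hs hx hu hxu) (hs hx hv hxv)).resolve_left hux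
  have huy : G.Adj u y :=
    (huv.adj_or_adj_of_square_adj hg (hs hy hu hyu) (hs hy hv hyv)).resolve_right hvy
  have hxy : x ≠ y := by rintro rfl; exact hvy hvx
  obtain ⟨-, hxy' | ⟨c, hxc, hcy⟩⟩ := hs hx hy hxy
  · exact absurd (hg.trans (egirth_le_four hxy' huy.symm huv hvx hxu hyv)) (by norm_num)
  · have hcu : c ≠ u := by rintro rfl; exact hux hxc.symm
    have hvc : v ≠ c := by rintro rfl; exact hvy hcy
    exact absurd (hg.trans (egirth_le_five hxc hcy huy.symm huv hvx hxy hcu hyv (Ne.symm hxu)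
      hvc)) (by norm_num)

lemma IsClique.subset_neighborSet_of_isIndepSet (hg : 7 ≤ G.egirth) {s : Set V}
    (hs : G.square.IsClique s) (hind : G.IsIndepSet s) {u v w : V} (hu : u ∈ s) (hv : v ∈ s)
    (huv : u ≠ v) (huw : G.Adj u w) (hwv : G.Adj w v) : s ⊆ G.neighborSet w := by
  intro x hx
  obtain rfl | hxu := eq_or_ne x u
  · exact huw.symm
  obtain rfl | hxv := eq_or_ne x v
  · exact hwv
  obtain ⟨-, hxu' | ⟨w₁, hxw₁, hw₁u⟩⟩ := hs hx hu hxu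
  · exact absurd hxu' (hind hx hu hxu)
  obtain ⟨-, hxv' | ⟨w₂, hxw₂, hw₂v⟩⟩ := hs hx hv hxv
  · exact absurd hxv' (hind hx hv hxv)
  obtain rfl | hw₁w := eq_or_ne w₁ w
  · exact hxw₁.symm
  obtain rfl | hw₂w := eq_or_ne w₂ w
  · exact hxw₂.symm
  obtain rfl | hw₁w₂ := eq_or_ne w₁ w₂
  · exact absurd (hg.trans (egirth_le_four huw hwv hw₂v.symm hw₁u huv hw₁w.symm)) (by norm_num)
  · have huw₂ : u ≠ w₂ := by rintro rfl; exact hind hu hv huv hw₂v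
    have hwx : w ≠ x := by rintro rfl; exact hind hx hu hxu huw.symm
    have hvw₁ : v ≠ w₁ := by rintro rfl; exact hind hx hv hxv hxw₁
    exact absurd (hg.trans (egirth_le_six huw hwv hw₂v.symm hxw₂.symm hxw₁ hw₁u huv hw₂w.symm
      hxv.symm hw₁w₂.symm hxu hw₁w huw₂ hwx hvw₁)) (by norm_num)

theorem IsClique.exists_subset_closedNeighborSet (hg : 7 ≤ G.egirth) {s : Set V}
    (hs : G.square.IsClique s) (hne : s.Nonempty) : ∃ w, s ⊆ G.closedNeighborSet w := by
  by_cases hind : G.IsIndepSet s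
  · obtain ⟨u, rfl⟩ | ⟨u, hu, v, hv, huv⟩ := hne.exists_eq_singleton_or_nontrivial
    · exact ⟨u, by simp⟩
    obtain ⟨-, huv' | ⟨w, huw, hwv⟩⟩ := hs hu hv huv
    · exact absurd huv' (hind hu hv huv)
    exact ⟨w, (hs.subset_neighborSet_of_isIndepSet hg hind hu hv huv huw hwv).trans
      (G.neighborSet_subset_closedNeighborSet w)⟩
  · obtain ⟨u, hu, v, hv, -, huv⟩ : ∃ u ∈ s, ∃ v ∈ s, u ≠ v ∧ G.Adj u v := by
      simpa [IsIndepSet, Set.Pairwise] using hind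
    obtain h | h := hs.subset_closedNeighborSet_of_adj (hg.trans' (by norm_num)) hu hv huv
    exacts [⟨u, h⟩, ⟨v, h⟩]

variable [Fintype V] [DecidableRel G.Adj]

lemma coe_insert_neighborFinset [DecidableEq V] (v : V) :
    (insert v (G.neighborFinset v) : Finset V) = G.closedNeighborSet v := by
  rw [Finset.coe_insert, coe_neighborFinset, closedNeighborSet]

lemma card_le_degree_add_one_of_subset_closedNeighborSet {s : Finset V} {v : V}
    (hs : (s : Set V) ⊆ G.closedNeighborSet v) : #s ≤ G.degree v + 1 := by
  classical
  rw [← coe_insert_neighborFinset, Finset.coe_subset] at hs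
  calc #s ≤ #(insert v (G.neighborFinset v)) := Finset.card_le_card hs
    _ ≤ G.degree v + 1 := card_neighborFinset_eq_degree G v ▸ Finset.card_insert_le _ _

theorem IsClique.card_le_maxDegree_add_one (hg : 7 ≤ G.egirth) {s : Finset V}
    (hs : G.square.IsClique (s : Set V)) : #s ≤ G.maxDegree + 1 := by
  obtain rfl | hne := s.eq_empty_or_nonempty
  · simp
  obtain ⟨w, hw⟩ := hs.exists_subset_closedNeighborSet hg (Finset.coe_nonempty.mpr hne)
  exact (card_le_degree_add_one_of_subset_closedNeighborSet hw).trans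
    (Nat.add_le_add_right (G.degree_le_maxDegree w) 1)

theorem cliqueNum_square_le (hg : 7 ≤ G.egirth) : G.square.cliqueNum ≤ G.maxDegree + 1 := by
  obtain ⟨s, hs⟩ := G.square.exists_isNClique_cliqueNum
  exact hs.card_eq ▸ hs.isClique.card_le_maxDegree_add_one hg

theorem degree_add_one_le_cliqueNum_square (v : V) : G.degree v + 1 ≤ G.square.cliqueNum := by
  classical
  have hs := G.isClique_square_closedNeighborSet v
  rw [← coe_insert_neighborFinset] at hs
  calc G.degree v + 1 = #(insert v (G.neighborFinset v)) := by
        rw [Finset.card_insert_of_notMem (by simp), card_neighborFinset_eq_degree]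
    _ ≤ G.square.cliqueNum := hs.card_le_cliqueNum

end SimpleGraph

/-- If `G` has girth at least `7` and maximum degree `Δ ≥ 2`, then the clique
number of `G²` equals `Δ + 1`. -/
theorem cliqueNum_square_of_girth_ge_seven {V : Type*} [Fintype V]
    (G : SimpleGraph V) [DecidableRel G.Adj]
    (hgirth : 7 ≤ G.egirth) (hdeg : 2 ≤ G.maxDegree) :
    G.square.cliqueNum = G.maxDegree + 1 := by
  have : Nonempty V := by
    by_contra h
    rw [not_nonempty_iff] at h
    simp [SimpleGraph.maxDegree_of_subsingleton] at hdeg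
  obtain ⟨v, hv⟩ := G.exists_maximal_degree_vertex
  exact (G.cliqueNum_square_le hgirth).antisymm (hv ▸ G.degree_add_one_le_cliqueNum_square v)
end

section
/- Let G = (A, B, E) be a convex bipartite graph with the convexity ordering <_B on B. Then the ordering <_B is a proper vertex ordering of G²[B]: for any three vertices u <_B v <_B w in B, if uw ∈ E(G²) then uv ∈ E(G²) and vw ∈ E(G²). Consequently G²[B] is a proper interval graph. -/
/-- `A, B` form a bipartition of the graph `G`: they partition the vertex set and
every edge goes between `A` and `B`. -/
def SimpleGraph.IsBipartitionOf {V : Type*} (G : SimpleGraph V) (A B : Set V) : Prop :=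
  (∀ v, v ∈ A ∨ v ∈ B) ∧ Disjoint A B ∧
    ∀ ⦃u v⦄, G.Adj u v → (u ∈ A ∧ v ∈ B) ∨ (u ∈ B ∧ v ∈ A)

/-- `ordB` is a convexity ordering of the part `B`: it is injective on `B` and for each
`a ∈ A` the neighborhood `N_G(a)` is a consecutive (convex) set with respect to it. -/
def SimpleGraph.IsConvexityOrder {V : Type*} (G : SimpleGraph V) (A B : Set V)
    (ordB : V → ℕ) : Prop :=
  Set.InjOn ordB B ∧
    ∀ a ∈ A, ∀ b₁ ∈ B, ∀ b₂ ∈ B, ∀ b₃ ∈ B, G.Adj a b₁ → G.Adj a b₃ →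
      ordB b₁ ≤ ordB b₂ → ordB b₂ ≤ ordB b₃ → G.Adj a b₂

/-- A graph has a proper vertex ordering (equivalently, is a proper interval graph)
if there is an injective ordering `f` of its vertices such that for `u < v < w`,
`uw ∈ E` implies `uv ∈ E` and `vw ∈ E`. -/
def SimpleGraph.HasProperVertexOrdering {W : Type*} (H : SimpleGraph W) : Prop :=
  ∃ f : W → ℕ, Function.Injective f ∧
    ∀ u v w, f u < f v → f v < f w → H.Adj u w → H.Adj u v ∧ H.Adj v w

/-! Two vertices of `B` are never adjacent in `G`, so `uw ∈ E(G²)` means that `u` and `w` have a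
common neighbour `a ∈ A`. The neighbourhood of `a` is an interval of `<_B` containing `u` and `w`,
hence every `v` between them; so `a` is also a common neighbour of `u, v` and of `v, w`. -/

namespace SimpleGraph

variable {V : Type*} {G : SimpleGraph V}

theorem square_adj_of_adj_of_adj {u a w : V} (huw : u ≠ w) (hua : G.Adj u a) (haw : G.Adj a w) :
    G.square.Adj u w :=
  ⟨huw, Or.inr ⟨a, hua, haw⟩⟩

namespace IsBipartitionOf

variable {A B : Set V}

theorem not_mem_left_of_mem_right (hbip : G.IsBipartitionOf A B) {v : V} (hv : v ∈ B) : v ∉ A :=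
  fun hvA => hbip.2.1.le_bot ⟨hvA, hv⟩

theorem mem_left_of_adj (hbip : G.IsBipartitionOf A B) {u a : V} (hu : u ∈ B)
    (hua : G.Adj u a) : a ∈ A :=
  ((hbip.2.2 hua).resolve_left fun h => hbip.not_mem_left_of_mem_right hu h.1).2

theorem not_adj_of_mem_right (hbip : G.IsBipartitionOf A B) {u w : V} (hu : u ∈ B)
    (hw : w ∈ B) : ¬ G.Adj u w :=
  fun huw => hbip.not_mem_left_of_mem_right hw (hbip.mem_left_of_adj hu huw)

theorem exists_common_neighbor_of_square_adj (hbip : G.IsBipartitionOf A B) {u w : V}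
    (hu : u ∈ B) (hw : w ∈ B) (huw : G.square.Adj u w) :
    ∃ a ∈ A, G.Adj u a ∧ G.Adj a w := by
  obtain ⟨-, huw | ⟨a, hua, haw⟩⟩ := huw
  · exact absurd huw (hbip.not_adj_of_mem_right hu hw)
  · exact ⟨a, hbip.mem_left_of_adj hu hua, hua, haw⟩

end IsBipartitionOf

theorem IsConvexityOrder.square_adj_of_between {A B : Set V} {ordB : V → ℕ}
    (hconv : G.IsConvexityOrder A B ordB) (hbip : G.IsBipartitionOf A B)
    {u v w : V} (hu : u ∈ B) (hv : v ∈ B) (hw : w ∈ B)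
    (huv : ordB u < ordB v) (hvw : ordB v < ordB w) (huw : G.square.Adj u w) :
    G.square.Adj u v ∧ G.square.Adj v w := by
  obtain ⟨a, haA, hua, haw⟩ := hbip.exists_common_neighbor_of_square_adj hu hw huw
  have hav : G.Adj a v := hconv.2 a haA u hu v hv w hw hua.symm haw huv.le hvw.le
  exact ⟨square_adj_of_adj_of_adj (ne_of_apply_ne ordB huv.ne) hua hav,
    square_adj_of_adj_of_adj (ne_of_apply_ne ordB hvw.ne) hav.symm haw⟩

theorem hasProperVertexOrdering_induce {H : SimpleGraph V} {s : Set V} {f : V → ℕ}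
    (hinj : s.InjOn f)
    (hproper : ∀ u ∈ s, ∀ v ∈ s, ∀ w ∈ s, f u < f v → f v < f w →
      H.Adj u w → H.Adj u v ∧ H.Adj v w) :
    (H.induce s).HasProperVertexOrdering :=
  ⟨fun x => f x, fun x y hxy => Subtype.ext (hinj x.2 y.2 hxy),
    fun u v w huv hvw huw => hproper u u.2 v v.2 w w.2 huv hvw huw⟩

end SimpleGraph

/-- In a convex bipartite graph `G = (A,B,E)`, the convexity ordering `<_B` is a
proper vertex ordering of `G²[B]`; consequently `G²[B]` is a proper interval graph. -/
theorem convex_bipartite_square_B_proper {V : Type*} (G : SimpleGraph V) (A B : Set V)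
    (ordB : V → ℕ) (hbip : G.IsBipartitionOf A B) (hconv : G.IsConvexityOrder A B ordB) :
    (∀ u ∈ B, ∀ v ∈ B, ∀ w ∈ B, ordB u < ordB v → ordB v < ordB w →
      G.square.Adj u w → G.square.Adj u v ∧ G.square.Adj v w) ∧
    (G.square.induce B).HasProperVertexOrdering := by
  have hproper : ∀ u ∈ B, ∀ v ∈ B, ∀ w ∈ B, ordB u < ordB v → ordB v < ordB w →
      G.square.Adj u w → G.square.Adj u v ∧ G.square.Adj v w :=
    fun _ hu _ hv _ hw huv hvw huw => hconv.square_adj_of_between hbip hu hv hw huv hvw huw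
  exact ⟨hproper, SimpleGraph.hasProperVertexOrdering_induce hconv.1 hproper⟩
end

section
/- Let G be a convex bipartite graph with maximum degree Δ ≥ 1. Then χ(G²) ≤ 2Δ. Moreover, for the complete bipartite graph K_{n,n} (which is convex bipartite with Δ = n), one has χ((K_{n,n})²) = 2n = 2Δ, so the bound is tight. -/
/-!
Order `B` by `ordB`, so that every `N(a)`, `a ∈ A`, is an interval. Colour `G²[A]` greedily by
increasing left end of `N(a)`, and `G²[B]` greedily by increasing `ordB`. In both cases the
neighbours of a vertex `v` that come no later than `v` lie, together with `v`, in a single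
neighbourhood `N(x)` (by convexity), so there are fewer than `Δ` of them and `Δ` colours suffice
on each side. Disjoint palettes for `A` and `B` give `2Δ` colours for `G²`.
For `K_{n,n}` every two vertices have a common neighbour, so its square is complete on `2n`
vertices.
-/

open Finset Function

theorem Finite.exists_injective_nat_lt_of_lt {α : Type*} [Finite α] (f : α → ℕ) :
    ∃ g : α → ℕ, Injective g ∧ ∀ a b, f a < f b → g a < g b := by
  obtain ⟨n, ⟨e⟩⟩ := Finite.exists_equiv_fin α
  -- lexicographic order on `(f a, e a)`, encoded in base `n`
  refine ⟨fun a => f a * n + e a, fun a b hab => e.injective (Fin.ext ?_), fun a b hab => ?_⟩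
  · simpa [Nat.mul_comm, Nat.mul_add_mod, Nat.mod_eq_of_lt (e a).2, Nat.mod_eq_of_lt (e b).2]
      using congrArg (· % n) hab
  · have := (e a).2
    calc f a * n + e a < (f a + 1) * n := by rw [Nat.succ_mul]; omega
      _ ≤ f b * n := Nat.mul_le_mul_right n hab
      _ ≤ f b * n + e b := Nat.le_add_right _ _

namespace SimpleGraph

theorem colorable_add_of_induce {V : Type*} {H : SimpleGraph V} {A B : Set V} {k m : ℕ}
    (hcover : ∀ v, v ∈ A ∨ v ∈ B) (hA : (H.induce A).Colorable k)
    (hB : (H.induce B).Colorable m) : H.Colorable (k + m) := by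
  classical
  obtain ⟨cA⟩ := hA
  obtain ⟨cB⟩ := hB
  refine ⟨Coloring.mk (fun v => if hv : v ∈ A then Fin.castAdd m (cA ⟨v, hv⟩)
    else Fin.natAdd k (cB ⟨v, (hcover v).resolve_left hv⟩)) fun {u v} huv => ?_⟩
  by_cases hu : u ∈ A <;> by_cases hv : v ∈ A <;> simp only [hu, hv, dite_true, dite_false]
  · exact fun h => cA.valid (by simpa using huv) (Fin.castAdd_injective _ _ h)
  · exact fun h => by simp only [Fin.ext_iff, Fin.val_castAdd, Fin.val_natAdd] at h; omega
  · exact fun h => by simp only [Fin.ext_iff, Fin.val_castAdd, Fin.val_natAdd] at h; omega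
  · exact fun h => cB.valid (by simpa using huv) (Fin.natAdd_injective _ _ h)

section Greedy

variable {V : Type*} [Fintype V] (H : SimpleGraph V) [DecidableRel H.Adj] (g : V → ℕ)

noncomputable def greedyColor (v : V) : ℕ :=
  Nat.find (Infinite.exists_notMem_finset
    ({u ∈ H.neighborFinset v | g u < g v}.attach.image fun u => greedyColor u.1))
termination_by g v
decreasing_by all_goals exact (mem_filter.1 u.2).2

theorem greedyColor_le (v : V) : greedyColor H g v ≤ #{u ∈ H.neighborFinset v | g u < g v} := by
  rw [greedyColor]
  set S := {u ∈ H.neighborFinset v | g u < g v}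
  obtain ⟨c, hc, hcS⟩ := exists_mem_notMem_of_card_lt_card
    (s := S.attach.image fun u => greedyColor H g u.1) (t := (range (#S + 1) : Finset ℕ))
    (by rw [card_range]; exact Nat.lt_succ_of_le (card_image_le.trans card_attach.le))
  exact (Nat.find_min' _ hcS).trans (Nat.lt_succ_iff.1 (mem_range.1 hc))

theorem greedyColor_ne_of_adj {u v : V} (huv : H.Adj u v) (hg : g u < g v) :
    greedyColor H g u ≠ greedyColor H g v := by
  intro h
  have hv := Nat.find_spec (Infinite.exists_notMem_finset
    ({w ∈ H.neighborFinset v | g w < g v}.attach.image fun w => greedyColor H g w.1))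
  rw [← greedyColor] at hv
  exact hv (mem_image.2 ⟨⟨u, by simp [huv.symm, hg]⟩, mem_attach _ _, h⟩)

theorem colorable_of_injective_of_card_lt (hg : Injective g) {k : ℕ}
    (h : ∀ v, #{u ∈ H.neighborFinset v | g u < g v} < k) : H.Colorable k := by
  refine (colorable_iff_exists_bdd_nat_coloring k).2
    ⟨Coloring.mk (greedyColor H g) fun {u v} huv => ?_,
      fun v => (greedyColor_le H g v).trans_lt (h v)⟩
  rcases lt_trichotomy (g u) (g v) with hlt | heq | hgt
  · exact greedyColor_ne_of_adj H g huv hlt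
  · exact absurd (hg heq) huv.ne
  · exact (greedyColor_ne_of_adj H g huv.symm hgt).symm

end Greedy

theorem colorable_of_forall_card_le_lt {V : Type*} [Fintype V] (H : SimpleGraph V)
    [DecidableRel H.Adj] (f : V → ℕ) {k : ℕ}
    (h : ∀ v, #{u ∈ H.neighborFinset v | f u ≤ f v} < k) : H.Colorable k := by
  obtain ⟨g, hg, hfg⟩ := Finite.exists_injective_nat_lt_of_lt f
  refine colorable_of_injective_of_card_lt H g hg fun v => (card_le_card ?_).trans_lt (h v)
  exact monotone_filter_right _ fun u _ hu => not_lt.1 fun hlt => (hfg v u hlt).not_gt hu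

theorem card_lt_maxDegree_of_forall_adj {V : Type*} [Fintype V] {G : SimpleGraph V}
    [DecidableRel G.Adj] {s : Set V} {S : Finset s} {x : V} {v : s} (hxv : G.Adj x v)
    (hS : ∀ u ∈ S, u ≠ v ∧ G.Adj x u) : #S < G.maxDegree := by
  classical
  calc #S ≤ #((G.neighborFinset x).erase v) :=
        card_le_card_of_injOn Subtype.val
          (fun u hu => by simpa [Subtype.val_inj, and_comm] using hS u hu)
          Subtype.val_injective.injOn
    _ < G.degree x := by
        rw [card_erase_of_mem (by simpa using hxv), card_neighborFinset_eq_degree]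
        exact Nat.sub_lt (G.degree_pos_iff_exists_adj x |>.2 ⟨v, hxv⟩) one_pos
    _ ≤ G.maxDegree := G.degree_le_maxDegree x

variable {V : Type*} {G : SimpleGraph V} {A B : Set V}

theorem IsBipartitionOf.symm (h : G.IsBipartitionOf A B) : G.IsBipartitionOf B A :=
  ⟨fun v => (h.1 v).symm, h.2.1.symm, fun _ _ huv => (h.2.2 huv).symm⟩

theorem IsBipartitionOf.mem_right_of_adj (h : G.IsBipartitionOf A B) {a b : V} (ha : a ∈ A)
    (hab : G.Adj a b) : b ∈ B :=
  (h.2.2 hab).elim And.right fun hb => absurd ha (Set.disjoint_right.1 h.2.1 hb.1)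

theorem IsBipartitionOf.exists_adj_adj_of_square_adj (h : G.IsBipartitionOf A B) {u v : V}
    (hu : u ∈ A) (hv : v ∈ A) (huv : G.square.Adj u v) : ∃ w, G.Adj u w ∧ G.Adj w v :=
  huv.2.resolve_left fun h' => Set.disjoint_left.1 h.2.1 hv (h.mem_right_of_adj hu h')

theorem IsConvexityOrder.adj_of_le_of_le {ordB : V → ℕ} (hConv : G.IsConvexityOrder A B ordB)
    (hBip : G.IsBipartitionOf A B) {a b₁ b₂ b₃ : V} (ha : a ∈ A) (h₁ : G.Adj a b₁)
    (h₃ : G.Adj a b₃) (hb₂ : b₂ ∈ B) (h₁₂ : ordB b₁ ≤ ordB b₂) (h₂₃ : ordB b₂ ≤ ordB b₃) :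
    G.Adj a b₂ :=
  hConv.2 a ha b₁ (hBip.mem_right_of_adj ha h₁) b₂ hb₂ b₃ (hBip.mem_right_of_adj ha h₃) h₁ h₃
    h₁₂ h₂₃

variable [Fintype V] [DecidableRel G.Adj] {ordB : V → ℕ}

theorem IsConvexityOrder.colorable_square_induce_left (hConv : G.IsConvexityOrder A B ordB)
    (hBip : G.IsBipartitionOf A B) (hΔ : 0 < G.maxDegree) :
    (G.square.induce A).Colorable G.maxDegree := by
  classical
  -- the left end of the interval `N(a)`; junk value `0` if `a` is isolated
  let left : A → ℕ := fun a => sInf (ordB '' G.neighborSet a)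
  have left_le {a : A} {w : V} (haw : G.Adj a w) : left a ≤ ordB w := Nat.sInf_le ⟨w, haw, rfl⟩
  have exists_left {a : A} {w : V} (haw : G.Adj a w) : ∃ b, G.Adj a b ∧ ordB b = left a :=
    Nat.sInf_mem (s := ordB '' G.neighborSet a) ⟨ordB w, w, haw, rfl⟩
  refine colorable_of_forall_card_le_lt _ left fun v => ?_
  rcases eq_empty_or_nonempty
    (((G.square.induce A).neighborFinset v).filter fun u => left u ≤ left v) with hS | ⟨u₀, hu₀⟩
  · rwa [hS, card_empty]
  obtain ⟨w₀, -, hw₀v⟩ := hBip.exists_adj_adj_of_square_adj u₀.2 v.2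
    ((mem_neighborFinset _ _ _).1 (mem_filter.1 hu₀).1).symm
  -- an earlier neighbour `u` of `v` starts at or before the left end `b` of `N(v)` and
  -- reaches into `N(v)`, so by convexity it contains `b`
  obtain ⟨b, hvb, hb⟩ := exists_left hw₀v.symm
  refine card_lt_maxDegree_of_forall_adj hvb.symm fun u hu => ?_
  have hvu : (G.square.induce A).Adj v u := (mem_neighborFinset _ _ _).1 (mem_filter.1 hu).1
  obtain ⟨w, huw, hwv⟩ := hBip.exists_adj_adj_of_square_adj u.2 v.2 hvu.symm
  obtain ⟨b', hub', hb'⟩ := exists_left huw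
  have hb'b : ordB b' ≤ ordB b := hb' ▸ hb ▸ (mem_filter.1 hu).2
  have hbw : ordB b ≤ ordB w := hb ▸ left_le hwv.symm
  exact ⟨fun h => hvu.ne h.symm,
    (hConv.adj_of_le_of_le hBip u.2 hub' huw (hBip.mem_right_of_adj v.2 hvb) hb'b hbw).symm⟩

theorem IsConvexityOrder.colorable_square_induce_right (hConv : G.IsConvexityOrder A B ordB)
    (hBip : G.IsBipartitionOf A B) (hΔ : 0 < G.maxDegree) :
    (G.square.induce B).Colorable G.maxDegree := by
  classical
  refine colorable_of_forall_card_le_lt _ (fun b : B => ordB b) fun v => ?_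
  rcases eq_empty_or_nonempty
    (((G.square.induce B).neighborFinset v).filter fun u : B => ordB u ≤ ordB v) with hS | hne
  · rwa [hS, card_empty]
  -- all earlier neighbours of `v` lie between the earliest one `u₀` and `v`,
  -- so in the interval `N(a)` for a common neighbour `a` of `u₀` and `v`
  obtain ⟨u₀, hu₀, hmin⟩ := exists_min_image _ (fun u : B => ordB u) hne
  obtain ⟨a, hu₀a, hav⟩ := hBip.symm.exists_adj_adj_of_square_adj u₀.2 v.2
    ((mem_neighborFinset _ _ _).1 (mem_filter.1 hu₀).1).symm
  have ha : a ∈ A := hBip.symm.mem_right_of_adj u₀.2 hu₀a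
  refine card_lt_maxDegree_of_forall_adj hav fun u hu => ?_
  have hvu : (G.square.induce B).Adj v u := (mem_neighborFinset _ _ _).1 (mem_filter.1 hu).1
  exact ⟨fun h => hvu.ne h.symm,
    hConv.adj_of_le_of_le hBip ha hu₀a.symm hav u.2 (hmin u hu) (mem_filter.1 hu).2⟩

theorem IsConvexityOrder.chromaticNumber_square_le (hConv : G.IsConvexityOrder A B ordB)
    (hBip : G.IsBipartitionOf A B) (hΔ : 0 < G.maxDegree) :
    G.square.chromaticNumber ≤ (2 * G.maxDegree : ℕ) := by
  rw [two_mul]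
  exact (colorable_add_of_induce hBip.1 (hConv.colorable_square_induce_left hBip hΔ)
    (hConv.colorable_square_induce_right hBip hΔ)).chromaticNumber_le

variable {α : Type*}

theorem square_completeBipartiteGraph_self : (completeBipartiteGraph α α).square = ⊤ := by
  ext u v
  refine ⟨fun h => h.1, fun huv => ⟨huv, ?_⟩⟩
  rcases u with i | i <;> rcases v with j | j
  · exact Or.inr ⟨Sum.inr i, by simp⟩
  · exact Or.inl (by simp)
  · exact Or.inl (by simp)
  · exact Or.inr ⟨Sum.inl i, by simp⟩

theorem isRegularOfDegree_completeBipartiteGraph_self [Fintype α]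
    [DecidableRel (completeBipartiteGraph α α).Adj] :
    (completeBipartiteGraph α α).IsRegularOfDegree (Fintype.card α) := by
  intro v
  rw [← card_neighborFinset_eq_degree, ← card_univ]
  rcases v with i | i
  · rw [← card_map (Embedding.inr : α ↪ α ⊕ α)]
    congr 1
    ext (j | j) <;> simp
  · rw [← card_map (Embedding.inl : α ↪ α ⊕ α)]
    congr 1
    ext (j | j) <;> simp

theorem maxDegree_completeBipartiteGraph_self [Fintype α]
    [DecidableRel (completeBipartiteGraph α α).Adj] :
    (completeBipartiteGraph α α).maxDegree = Fintype.card α := by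
  cases isEmpty_or_nonempty α
  · simp
  · exact isRegularOfDegree_completeBipartiteGraph_self.maxDegree_eq

end SimpleGraph

/-- For a finite convex bipartite graph `G` with maximum degree `Δ ≥ 1`,
`χ(G²) ≤ 2Δ`; moreover, for the complete bipartite graph `K_{n,n}` (which is
convex bipartite with `Δ = n`) one has `χ((K_{n,n})²) = 2n`, so the bound is tight. -/
theorem chromaticNumber_square_le_two_mul_maxDegree :
    (∀ (V : Type) [Fintype V] (G : SimpleGraph V) [DecidableRel G.Adj]
      (A B : Set V) (ordB : V → ℕ),
      G.IsBipartitionOf A B → G.IsConvexityOrder A B ordB → 1 ≤ G.maxDegree →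
      G.square.chromaticNumber ≤ ((2 * G.maxDegree : ℕ) : ℕ∞)) ∧
    (∀ n : ℕ,
      @SimpleGraph.maxDegree _ (completeBipartiteGraph (Fin n) (Fin n)) _
        (Classical.decRel _) = n ∧
      (completeBipartiteGraph (Fin n) (Fin n)).square.chromaticNumber
        = ((2 * n : ℕ) : ℕ∞)) := by
  refine ⟨fun V _ G _ A B ordB hBip hConv hΔ => hConv.chromaticNumber_square_le hBip hΔ,
    fun n => ⟨?_, ?_⟩⟩
  · convert SimpleGraph.maxDegree_completeBipartiteGraph_self (α := Fin n)
    simp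
  · rw [SimpleGraph.square_completeBipartiteGraph_self, SimpleGraph.chromaticNumber_top]
    simp [two_mul]
end

section
/- Let G = (A, B, E) be a bipartite graph such that neither G²[A] nor G²[B] contains an induced complement of a cycle of odd length greater than five. Then G² does not contain an induced complement of a cycle of odd length greater than five. -/
/-- A graph contains an odd anti-hole of size larger than five: an induced copy of
the complement of a cycle of odd length at least seven. -/
def SimpleGraph.HasLargeOddAntihole {W : Type*} (H : SimpleGraph W) : Prop :=
  ∃ n : ℕ, 7 ≤ n ∧ Odd n ∧ Nonempty ((SimpleGraph.cycleGraph n)ᶜ ↪g H)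

open Fin.NatCast Fin.CommRing

lemma Fin.forall_of_imp_add_one {n : ℕ} [NeZero n] {P : Fin n → Prop}
    (h : ∀ p, P p → P (p + 1)) {p : Fin n} (hp : P p) (q : Fin n) : P q := by
  have hadd : ∀ j : ℕ, P (p + j) := by
    intro j
    induction j with
    | zero => simpa using hp
    | succ j ih => simpa [add_assoc] using h _ ih
  simpa using hadd (q - p).val

namespace SimpleGraph

variable {V W W' : Type*}

def OtherColorNeighborsClique (H : SimpleGraph W) (c : W → Bool) : Prop :=
  ∀ r, H.IsClique {q | H.Adj r q ∧ c q ≠ c r}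

lemma OtherColorNeighborsClique.comap {H : SimpleGraph W} {H' : SimpleGraph W'} {c : W' → Bool}
    (h : H'.OtherColorNeighborsClique c) (f : H ↪g H') : H.OtherColorNeighborsClique (c ∘ f) := by
  rintro r u ⟨hru, hu⟩ v ⟨hrv, hv⟩ huv
  exact f.map_adj_iff.mp <|
    h (f r) ⟨f.map_adj_iff.mpr hru, hu⟩ ⟨f.map_adj_iff.mpr hrv, hv⟩ (f.injective.ne huv)

section Square

variable {G : SimpleGraph V}

lemma Coloring.adj_of_square_adj (C : G.Coloring Bool) {u v : V} (h : G.square.Adj u v)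
    (hne : C u ≠ C v) : G.Adj u v := by
  obtain ⟨-, h | ⟨w, huw, hwv⟩⟩ := h
  · exact h
  · exact absurd ((Bool.eq_not_iff.mpr (C.valid huw)).trans
      (Bool.eq_not_iff.mpr (C.valid hwv).symm).symm) hne

lemma Coloring.otherColorNeighborsClique_square (C : G.Coloring Bool) :
    G.square.OtherColorNeighborsClique C := by
  rintro r u ⟨hru, hu⟩ v ⟨hrv, hv⟩ huv
  exact ⟨huv, .inr ⟨r, (C.adj_of_square_adj hru hu.symm).symm, C.adj_of_square_adj hrv hv.symm⟩⟩

open Classical in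
noncomputable def IsBipartitionOf.toColoring {A B : Set V} (h : G.IsBipartitionOf A B) :
    G.Coloring Bool :=
  Coloring.mk (fun v => decide (v ∈ A)) fun huv => by
    rcases h.2.2 huv with ⟨hu, hv⟩ | ⟨hu, hv⟩
    · simp [hu, Set.disjoint_right.mp h.2.1 hv]
    · simp [hv, Set.disjoint_right.mp h.2.1 hu]

end Square

section Antihole

variable {n : ℕ}

lemma compl_cycleGraph_adj_of_sub_eq {u v : Fin (n + 2)} {k : ℕ} (h : v - u = k) (h2 : 2 ≤ k)
    (hk : k ≤ n) : (cycleGraph (n + 2))ᶜ.Adj u v := by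
  have hk0 : (k : Fin (n + 2)) ≠ 0 := fun h0 =>
    absurd (Nat.le_of_dvd (by omega) (Fin.natCast_eq_zero.mp h0)) (by omega)
  refine ⟨fun huv => hk0 (by rw [← h, huv, sub_self]), fun hadj => ?_⟩
  rcases cycleGraph_adj.mp hadj with h1 | h1
  · have hk1 : ((k + 1 : ℕ) : Fin (n + 2)) = 0 := by push_cast; rw [← h, ← h1]; ring
    exact absurd (Nat.le_of_dvd (by omega) (Fin.natCast_eq_zero.mp hk1)) (by omega)
  · have := congrArg Fin.val (h.symm.trans h1)
    rw [Fin.val_cast_of_lt (by omega), Fin.val_one] at this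
    omega

lemma not_compl_cycleGraph_adj_add_one (q : Fin (n + 2)) : ¬(cycleGraph (n + 2))ᶜ.Adj q (q + 1) :=
  fun h => h.2 (.inr (by ring))

lemma exists_eq_add_one_of_odd (hodd : Odd (n + 2)) (c : Fin (n + 2) → Bool) :
    ∃ q, c q = c (q + 1) := by
  by_contra! h
  let C : (cycleGraph (n + 2)).Coloring Bool := Coloring.mk c fun {u v} huv => by
    rcases cycleGraph_adj.mp huv with h1 | h1
    · rw [← sub_add_cancel u v, h1, add_comm]; exact (h v).symm
    · rw [← sub_add_cancel v u, h1, add_comm]; exact h u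
  have := C.colorable.chromaticNumber_le
  rw [chromaticNumber_cycleGraph_of_odd _ (by omega) hodd] at this
  norm_num at this

variable {c : Fin (n + 2) → Bool}

lemma OtherColorNeighborsClique.ne_add_natCast_add_one
    (hc : (cycleGraph (n + 2))ᶜ.OtherColorNeighborsClique c) {p : Fin (n + 2)}
    (hp : c p ≠ c (p + 1)) {k : ℕ} (h3 : 3 ≤ k) (hk : k + 1 ≤ n) : c (p + k) ≠ c (p + k + 1) := by
  set q := p + (k : Fin (n + 2)) with hq_def
  intro hq
  obtain ⟨r, hr, hrq, hrq1⟩ : ∃ r, c r ≠ c q ∧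
      (cycleGraph (n + 2))ᶜ.Adj r q ∧ (cycleGraph (n + 2))ᶜ.Adj r (q + 1) := by
    by_cases hpq : c p = c q
    · refine ⟨p + 1, hpq ▸ hp.symm,
        compl_cycleGraph_adj_of_sub_eq (k := k - 1) ?_ (by omega) (by omega),
        compl_cycleGraph_adj_of_sub_eq (k := k) ?_ (by omega) (by omega)⟩
      · rw [Nat.cast_sub (by omega), hq_def]; ring
      · rw [hq_def]; ring
    · refine ⟨p, hpq, compl_cycleGraph_adj_of_sub_eq (k := k) ?_ (by omega) (by omega),
        compl_cycleGraph_adj_of_sub_eq (k := k + 1) ?_ (by omega) (by omega)⟩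
      · rw [hq_def]; ring
      · rw [hq_def]; push_cast; ring
  exact not_compl_cycleGraph_adj_add_one q (hc r ⟨hrq, hr.symm⟩ ⟨hrq1, hq ▸ hr.symm⟩ (by simp))

lemma OtherColorNeighborsClique.ne_add_one_add_one
    (hc : (cycleGraph (n + 2))ᶜ.OtherColorNeighborsClique c) (hn : 5 ≤ n) {p : Fin (n + 2)}
    (hp : c p ≠ c (p + 1)) : c (p + 1) ≠ c (p + 1 + 1) := by
  have h := hc.ne_add_natCast_add_one (hc.ne_add_natCast_add_one hp (k := 4) (by omega) (by omega))
    (k := n - 1) (by omega) (by omega)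
  have hwrap : ((n - 1 : ℕ) : Fin (n + 2)) + 3 = 0 := by
    rw [← Fin.natCast_self (n + 2)]; push_cast [Nat.cast_sub (by omega : 1 ≤ n)]; ring
  have hp1 : p + ((4 : ℕ) : Fin (n + 2)) + ((n - 1 : ℕ) : Fin (n + 2)) = p + 1 := by
    linear_combination hwrap
  rwa [hp1] at h

theorem OtherColorNeighborsClique.eq_of_compl_cycleGraph
    (hc : (cycleGraph (n + 2))ᶜ.OtherColorNeighborsClique c) (hn : 5 ≤ n) (hodd : Odd (n + 2))
    (i j : Fin (n + 2)) : c i = c j := by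
  by_contra hij
  obtain ⟨p, hp⟩ : ∃ p, c p ≠ c (p + 1) := by
    by_contra! h
    exact hij <|
      Fin.forall_of_imp_add_one (P := fun x => c i = c x) (fun p hp => hp.trans (h p)) rfl j
  obtain ⟨q, hq⟩ := exists_eq_add_one_of_odd hodd c
  exact Fin.forall_of_imp_add_one (P := fun x => c x ≠ c (x + 1))
    (fun _ => hc.ne_add_one_add_one hn) hp q hq

end Antihole

end SimpleGraph

/-- If `G = (A,B,E)` is bipartite and neither `G²[A]` nor `G²[B]` contains an odd
anti-hole of size larger than five, then neither does `G²`. -/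
theorem square_no_large_odd_antihole {V : Type*} (G : SimpleGraph V) (A B : Set V)
    (hbip : G.IsBipartitionOf A B)
    (hA : ¬ (G.square.induce A).HasLargeOddAntihole)
    (hB : ¬ (G.square.induce B).HasLargeOddAntihole) :
    ¬ G.square.HasLargeOddAntihole := by
  rintro ⟨n, hn, hodd, ⟨f⟩⟩
  obtain ⟨n, rfl⟩ : ∃ m, n = m + 2 := ⟨n - 2, by omega⟩
  have hc := hbip.toColoring.otherColorNeighborsClique_square.comap f
  have hside : ∀ i, f i ∈ A ↔ f 0 ∈ A := fun i =>
    decide_eq_decide.mp (hc.eq_of_compl_cycleGraph (by omega) hodd i 0)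
  by_cases h0 : f 0 ∈ A
  · exact hA ⟨_, hn, hodd, ⟨RelEmbedding.codRestrict A f fun i => (hside i).mpr h0⟩⟩
  · exact hB ⟨_, hn, hodd, ⟨RelEmbedding.codRestrict B f fun i =>
      (hbip.1 _).resolve_left fun h => h0 ((hside i).mp h)⟩⟩
end

section
/- Let G = (A, B, E) be a convex bipartite graph and P = (a_1, ..., a_k) an (A, b, b')-path in G² with a_1 <_A a_k. Then: (i) if k = 2 then N_G(a_1) ∩ N_G(a_2) ⊆ (b, b'), and if k > 2 then N_G(a_j) ⊆ (b, b') for all 2 ≤ j ≤ k−1; (ii) every vertex of the interval [b, b'] in B is adjacent in G to some a_j, 1 ≤ j ≤ k. -/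
/-- `ordA` orders `A` by the right endpoints of the neighborhood intervals in `B`:
it is injective on `A`, and whenever `ordA a ≤ ordA a'`, the right endpoint of the
interval of `a` is at most that of `a'` (i.e. every `G`-neighbor of `a` is `≤_B`
some `G`-neighbor of `a'`). -/
def SimpleGraph.IsRightEndpointOrder {V : Type*} (G : SimpleGraph V) (A B : Set V)
    (ordA ordB : V → ℕ) : Prop :=
  Set.InjOn ordA A ∧
    ∀ a ∈ A, ∀ a' ∈ A, ordA a ≤ ordA a' → ∀ b ∈ B, G.Adj a b →
      ∃ b' ∈ B, G.Adj a' b' ∧ ordB b ≤ ordB b'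

/-- `(p 0, …, p (k-1))` is an `(A, b, b')`-path in `G²`: an induced path in `G²`
with all vertices in `A`, where `b ∈ B` is a `G`-neighbor of exactly the first
vertex and `b' ∈ B` is a `G`-neighbor of exactly the last vertex, `b ≠ b'`. -/
structure SimpleGraph.IsABPath {V : Type*} (G : SimpleGraph V) (A B : Set V)
    (k : ℕ) (p : Fin k → V) (b b' : V) : Prop where
  two_le : 2 ≤ k
  mem_A : ∀ i, p i ∈ A
  inj : Function.Injective p
  induced : ∀ i j : Fin k, (i : ℕ) < (j : ℕ) →
    (G.square.Adj (p i) (p j) ↔ (j : ℕ) = (i : ℕ) + 1)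
  b_mem : b ∈ B
  b'_mem : b' ∈ B
  b_ne : b ≠ b'
  b_first : ∀ i : Fin k, G.Adj (p i) b ↔ (i : ℕ) = 0
  b'_last : ∀ i : Fin k, G.Adj (p i) b' ↔ (i : ℕ) = k - 1

/-!
The convexity of the neighbourhoods `N_G(a)` in `B` gives a dichotomy: if `a ∈ A` is not adjacent
to `z ∈ B`, then `N_G(a)` lies entirely below `z` or entirely above it. Consecutive vertices of
the path have a common `G`-neighbour, so along a stretch of the path avoiding `z` all the
neighbourhoods lie on the same side of `z`. Since `b` sees only `a_1` and `b'` only `a_k`, this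
forces every vertex of `[b, b']` to be seen by the path, and keeps the neighbourhoods of the inner
vertices strictly between `b` and `b'`; the right-endpoint order and `a_1 <_A a_k` give
`b <_B b'`.
-/

namespace SimpleGraph

variable {V : Type*} {G : SimpleGraph V} {A B : Set V} {ordA ordB : V → ℕ}

namespace IsBipartitionOf

variable (hbip : G.IsBipartitionOf A B)
include hbip

theorem mem_right_of_adj_s16 {a x : V} (ha : a ∈ A) (h : G.Adj a x) : x ∈ B :=
  (hbip.2.2 h).elim And.right fun h' => absurd ha (Set.disjoint_left.mp hbip.2.1.symm h'.1)

theorem not_adj_of_mem_left {a a' : V} (ha : a ∈ A) (ha' : a' ∈ A) : ¬ G.Adj a a' :=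
  fun h => Set.disjoint_left.mp hbip.2.1 ha' (hbip.mem_right_of_adj_s16 ha h)

theorem exists_adj_adj_of_square_adj_s16 {a a' : V} (ha : a ∈ A) (ha' : a' ∈ A)
    (h : G.square.Adj a a') : ∃ c, G.Adj a c ∧ G.Adj a' c := by
  obtain ⟨-, hadj | ⟨c, hc, hc'⟩⟩ := h
  · exact absurd hadj (hbip.not_adj_of_mem_left ha ha')
  · exact ⟨c, hc, hc'.symm⟩

end IsBipartitionOf

namespace IsConvexityOrder

variable (hconv : G.IsConvexityOrder A B ordB) (hbip : G.IsBipartitionOf A B)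
include hconv hbip

theorem forall_adj_lt_of_adj_le {a w z : V} (ha : a ∈ A) (hz : z ∈ B) (hnz : ¬ G.Adj a z)
    (hw : G.Adj a w) (hwz : ordB w ≤ ordB z) : ∀ c, G.Adj a c → ordB c < ordB z := by
  intro c hc
  by_contra! hzc
  exact hnz (hconv.2 a ha w (hbip.mem_right_of_adj_s16 ha hw) z hz c (hbip.mem_right_of_adj_s16 ha hc)
    hw hc hwz hzc)

theorem forall_adj_lt_iff_of_adj_adj {a a' c z : V} (ha : a ∈ A) (ha' : a' ∈ A) (hz : z ∈ B)
    (hnz : ¬ G.Adj a z) (hnz' : ¬ G.Adj a' z) (hc : G.Adj a c) (hc' : G.Adj a' c) :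
    (∀ w, G.Adj a w → ordB w < ordB z) ↔ (∀ w, G.Adj a' w → ordB w < ordB z) :=
  ⟨fun h => hconv.forall_adj_lt_of_adj_le hbip ha' hz hnz' hc' (h c hc).le,
    fun h => hconv.forall_adj_lt_of_adj_le hbip ha hz hnz hc (h c hc').le⟩

end IsConvexityOrder

namespace IsABPath

variable {k : ℕ} {p : Fin k → V} {b b' : V} (hP : G.IsABPath A B k p b b')
include hP

theorem exists_adj_adj_succ (hbip : G.IsBipartitionOf A B) {l : ℕ} (hl : l + 1 < k) :
    ∃ c, G.Adj (p ⟨l, by omega⟩) c ∧ G.Adj (p ⟨l + 1, hl⟩) c :=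
  hbip.exists_adj_adj_of_square_adj_s16 (hP.mem_A _) (hP.mem_A _)
    ((hP.induced ⟨l, by omega⟩ ⟨l + 1, hl⟩ l.lt_succ_self).mpr rfl)

theorem forall_adj_lt_iff (hbip : G.IsBipartitionOf A B) (hconv : G.IsConvexityOrder A B ordB)
    {z : V} (hz : z ∈ B) {i j : Fin k} (hij : i ≤ j)
    (hnz : ∀ l, i ≤ l → l ≤ j → ¬ G.Adj (p l) z) :
    (∀ c, G.Adj (p i) c → ordB c < ordB z) ↔ (∀ c, G.Adj (p j) c → ordB c < ordB z) := by
  obtain ⟨j, hj⟩ := j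
  simp only [Fin.le_iff_val_le_val] at hij hnz
  induction j, hij using Nat.le_induction with
  | base => rfl
  | succ n hin ih =>
    obtain ⟨c, hc, hc'⟩ := hP.exists_adj_adj_succ hbip hj
    refine (ih (by omega) (fun l h1 h2 => hnz l h1 (by omega))).trans ?_
    exact hconv.forall_adj_lt_iff_of_adj_adj hbip (hP.mem_A _) (hP.mem_A _) hz
      (hnz _ hin n.le_succ) (hnz _ (hin.trans n.le_succ) le_rfl) hc hc'

theorem ordB_lt (hbip : G.IsBipartitionOf A B) (hconv : G.IsConvexityOrder A B ordB)
    (hord : G.IsRightEndpointOrder A B ordA ordB) {i₀ i₁ : Fin k} (h₀ : (i₀ : ℕ) = 0)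
    (h₁ : (i₁ : ℕ) = k - 1) (hA : ordA (p i₀) ≤ ordA (p i₁)) : ordB b < ordB b' := by
  have hk := hP.two_le
  obtain ⟨c, -, hc, hbc⟩ :=
    hord.2 _ (hP.mem_A i₀) _ (hP.mem_A i₁) hA b hP.b_mem ((hP.b_first i₀).mpr h₀)
  by_contra! hb'b
  have := hconv.forall_adj_lt_of_adj_le hbip (hP.mem_A i₁) hP.b_mem
    (mt (hP.b_first i₁).mp (by omega)) ((hP.b'_last i₁).mpr h₁) hb'b c hc
  omega

theorem ordB_mem_Ioo_of_adj_of_adj (hbip : G.IsBipartitionOf A B)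
    (hconv : G.IsConvexityOrder A B ordB) (hbb' : ordB b < ordB b') {i₀ i₁ : Fin k}
    (h₀ : (i₀ : ℕ) = 0) (h₁ : (i₁ : ℕ) = k - 1) {x : V} (hx₀ : G.Adj (p i₀) x)
    (hx₁ : G.Adj (p i₁) x) : ordB x ∈ Set.Ioo (ordB b) (ordB b') := by
  have hk := hP.two_le
  refine ⟨?_, ?_⟩
  · by_contra! hxb
    have := hconv.forall_adj_lt_of_adj_le hbip (hP.mem_A i₁) hP.b_mem
      (mt (hP.b_first i₁).mp (by omega)) hx₁ hxb b' ((hP.b'_last i₁).mpr h₁)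
    omega
  · by_contra! hb'x
    have := hconv.forall_adj_lt_of_adj_le hbip (hP.mem_A i₀) hP.b'_mem
      (mt (hP.b'_last i₀).mp (by omega)) ((hP.b_first i₀).mpr h₀) hbb'.le x hx₀
    omega

theorem ordB_mem_Ioo_of_adj_inner (hbip : G.IsBipartitionOf A B)
    (hconv : G.IsConvexityOrder A B ordB) (hbb' : ordB b < ordB b') {j : Fin k}
    (hj₀ : 0 < (j : ℕ)) (hj₁ : (j : ℕ) < k - 1) {x : V} (hxj : G.Adj (p j) x) :
    ordB x ∈ Set.Ioo (ordB b) (ordB b') := by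
  let first : Fin k := ⟨0, by omega⟩
  let last : Fin k := ⟨k - 1, by omega⟩
  refine ⟨?_, ?_⟩
  · by_contra! hxb
    have hjb := hconv.forall_adj_lt_of_adj_le hbip (hP.mem_A j) hP.b_mem
      (mt (hP.b_first j).mp (by omega)) hxj hxb
    have := (hP.forall_adj_lt_iff hbip hconv hP.b_mem (j := last) (show (j : ℕ) ≤ k - 1 by omega)
      fun l hjl _ => mt (hP.b_first l).mp (by omega)).mp hjb b' ((hP.b'_last last).mpr rfl)
    omega
  · by_contra! hb'x
    have hfirst := hconv.forall_adj_lt_of_adj_le hbip (hP.mem_A first) hP.b'_mem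
      (mt (hP.b'_last first).mp (show 0 ≠ k - 1 by omega)) ((hP.b_first first).mpr rfl) hbb'.le
    have := (hP.forall_adj_lt_iff hbip hconv hP.b'_mem (i := first) (Nat.zero_le _)
      fun l _ hlj => mt (hP.b'_last l).mp (by omega)).mp hfirst x hxj
    omega

theorem exists_adj_of_ordB_mem_Icc (hbip : G.IsBipartitionOf A B)
    (hconv : G.IsConvexityOrder A B ordB) {x : V} (hx : x ∈ B)
    (hbxb' : ordB x ∈ Set.Icc (ordB b) (ordB b')) : ∃ i, G.Adj (p i) x := by
  obtain ⟨hbx, hxb'⟩ := hbxb'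
  have hk := hP.two_le
  let first : Fin k := ⟨0, by omega⟩
  let last : Fin k := ⟨k - 1, by omega⟩
  by_contra! hnx
  have hfirst := hconv.forall_adj_lt_of_adj_le hbip (hP.mem_A first) hx (hnx first)
    ((hP.b_first first).mpr rfl) hbx
  have := (hP.forall_adj_lt_iff hbip hconv hx (i := first) (j := last) (Nat.zero_le _)
    fun l _ _ => hnx l).mp hfirst b' ((hP.b'_last last).mpr rfl)
  omega

end IsABPath

end SimpleGraph

/-- For an `(A, b, b')`-path `P = (a_1, …, a_k)` in the square of a convex bipartite
graph with `a_1 <_A a_k`: (i) if `k = 2` then `N_G(a_1) ∩ N_G(a_2) ⊆ (b, b')`, and if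
`k > 2` then `N_G(a_j) ⊆ (b, b')` for all `2 ≤ j ≤ k−1`; (ii) every vertex of
`[b, b']` is a `G`-neighbor of some `a_j`. -/
theorem abPath_interval {V : Type*} (G : SimpleGraph V) (A B : Set V)
    (ordA ordB : V → ℕ) (hbip : G.IsBipartitionOf A B)
    (hconv : G.IsConvexityOrder A B ordB)
    (hord : G.IsRightEndpointOrder A B ordA ordB)
    (k : ℕ) (hk : 2 ≤ k) (p : Fin k → V) (b b' : V)
    (hP : G.IsABPath A B k p b b')
    (hfirstlast : ordA (p ⟨0, by omega⟩) < ordA (p ⟨k - 1, by omega⟩)) :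
    ((k = 2 → ∀ x ∈ B, G.Adj (p ⟨0, by omega⟩) x → G.Adj (p ⟨k - 1, by omega⟩) x →
        ordB b < ordB x ∧ ordB x < ordB b') ∧
      (2 < k → ∀ j : Fin k, 0 < (j : ℕ) → (j : ℕ) < k - 1 →
        ∀ x ∈ B, G.Adj (p j) x → ordB b < ordB x ∧ ordB x < ordB b')) ∧
    (∀ x ∈ B, ordB b ≤ ordB x → ordB x ≤ ordB b' → ∃ i : Fin k, G.Adj (p i) x) := by
  have hbb' : ordB b < ordB b' := hP.ordB_lt hbip hconv hord rfl rfl hfirstlast.le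
  exact ⟨⟨fun _ _ _ hx₀ hx₁ => hP.ordB_mem_Ioo_of_adj_of_adj hbip hconv hbb' rfl rfl hx₀ hx₁,
      fun _ _ hj₀ hj₁ _ _ hxj => hP.ordB_mem_Ioo_of_adj_inner hbip hconv hbb' hj₀ hj₁ hxj⟩,
    fun _ hx hbx hxb' => hP.exists_adj_of_ordB_mem_Icc hbip hconv hx ⟨hbx, hxb'⟩⟩
end

section
/- Let G = (A, B, E) be a convex bipartite graph and let C be an induced cycle in G² of length k ≥ 4. Then exactly 2 vertices of C lie in B (the side with the consecutive-neighborhood ordering) and k − 2 vertices of C lie in A. Moreover, the vertices of C can be labeled (v_1, ..., v_k) so that (v_1, ..., v_{k−2}) is an (A, v_k, v_{k−1})-path. -/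
/-- `(c 0, …, c (k-1))` is an induced cycle in `H`: the vertices are distinct and
two of them are adjacent iff they are (cyclically) consecutive. -/
def SimpleGraph.IsInducedCycleOn {V : Type*} (H : SimpleGraph V) (k : ℕ)
    (c : Fin k → V) : Prop :=
  Function.Injective c ∧ ∀ i j : Fin k,
    H.Adj (c i) (c j) ↔ ((j : ℕ) = ((i : ℕ) + 1) % k ∨ (i : ℕ) = ((j : ℕ) + 1) % k)

/-!
Each vertex `v` of `G` occupies an interval of `<_B`: `N(v)` if `v ∈ A`, the point `v` if
`v ∈ B`. Along a walk in `G²` avoiding `b₀ ∈ B` and `N(b₀)`, convexity lets the interval jump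
from one side of `b₀` to the other only between two `B`-vertices that are both `G²`-adjacent to
`b₀`. On a hole of length `k ≥ 4` no two consecutive vertices are adjacent to a common third
one, so if `c t, c (t + 1) ∈ B` then every other `B`-vertex of the hole lies between them in
`<_B`, and no other consecutive pair of `B`-vertices exists. Such a pair does exist: a
`B`-vertex with both hole neighbours in `A` would make them adjacent, and a hole inside `A` is
impossible since the vertex whose interval has the rightmost left end would make its two hole
neighbours adjacent through that end. The hole read backwards from the vertex before the pair
is the `(A, b, b')`-path.
-/

open scoped Fin.CommRing

theorem Nat.eq_add_one_mod_iff {i j k : ℕ} (hi : i < k) (hj : j < k) :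
    j = (i + 1) % k ↔ j = i + 1 ∨ i + 1 = k ∧ j = 0 := by
  rcases (show i + 1 ≤ k by omega).lt_or_eq with h | h
  · rw [Nat.mod_eq_of_lt h]; omega
  · rw [h, Nat.mod_self]; omega

theorem Fin.add_one_eq_zero_of_val_eq {k : ℕ} [NeZero k] {b : Fin k} (hb : (b : ℕ) = k - 1) :
    b + 1 = 0 := by
  rw [Fin.ext_iff, Fin.val_add, Fin.val_one', Nat.add_mod_mod, hb,
    Nat.sub_add_cancel (Nat.one_le_iff_ne_zero.mpr (NeZero.ne k)), Nat.mod_self, Fin.val_zero]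

namespace SimpleGraph

variable {V : Type*} {G : SimpleGraph V} {A B : Set V} {ordB : V → ℕ} {u v : V}
  {k : ℕ} {c : Fin k → V}

namespace IsBipartitionOf

theorem mem_A_iff_notMem_B (hbip : G.IsBipartitionOf A B) : u ∈ A ↔ u ∉ B :=
  ⟨fun hu => Set.disjoint_left.mp hbip.2.1 hu, (hbip.1 u).resolve_right⟩

theorem not_adj_of_mem_B (hbip : G.IsBipartitionOf A B) (hu : u ∈ B) (hv : v ∈ B) :
    ¬ G.Adj u v := fun h => by
  rcases hbip.2.2 h with ⟨hu', -⟩ | ⟨-, hv'⟩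
  · exact hbip.mem_A_iff_notMem_B.mp hu' hu
  · exact hbip.mem_A_iff_notMem_B.mp hv' hv

theorem square_adj_iff_adj (hbip : G.IsBipartitionOf A B) (hu : u ∈ A) (hv : v ∈ B) :
    G.square.Adj u v ↔ G.Adj u v := by
  refine ⟨?_, fun h => ⟨G.ne_of_adj h, Or.inl h⟩⟩
  rintro ⟨-, h | ⟨w, huw, hwv⟩⟩
  · exact h
  rcases hbip.2.2 huw with ⟨-, hw⟩ | ⟨hu', -⟩
  · exact absurd hwv (hbip.not_adj_of_mem_B hw hv)
  · exact absurd hu' (hbip.mem_A_iff_notMem_B.mp hu)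

theorem exists_adj_adj_of_square_adj_of_mem_B (hbip : G.IsBipartitionOf A B) (hu : u ∈ B)
    (hv : v ∈ B) (h : G.square.Adj u v) : ∃ a ∈ A, G.Adj a u ∧ G.Adj a v := by
  rcases h with ⟨-, h | ⟨w, huw, hwv⟩⟩
  · exact absurd h (hbip.not_adj_of_mem_B hu hv)
  rcases hbip.2.2 huw with ⟨hu', -⟩ | ⟨-, hw⟩
  · exact absurd hu (hbip.mem_A_iff_notMem_B.mp hu')
  · exact ⟨w, hw, huw.symm, hwv⟩

theorem exists_adj_adj_of_square_adj_of_mem_A (hbip : G.IsBipartitionOf A B) (hu : u ∈ A)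
    (hv : v ∈ A) (h : G.square.Adj u v) : ∃ b ∈ B, G.Adj u b ∧ G.Adj v b := by
  rcases h with ⟨-, h | ⟨w, huw, hwv⟩⟩
  · rcases hbip.2.2 h with ⟨-, hv'⟩ | ⟨hu', -⟩
    · exact absurd hv' (hbip.mem_A_iff_notMem_B.mp hv)
    · exact absurd hu' (hbip.mem_A_iff_notMem_B.mp hu)
  rcases hbip.2.2 huw with ⟨-, hw⟩ | ⟨hu', -⟩
  · exact ⟨w, hw, huw, hwv.symm⟩
  · exact absurd hu' (hbip.mem_A_iff_notMem_B.mp hu)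

end IsBipartitionOf

/-- `v` lies left of position `r`: `ordB v < r` if `v ∈ B`, and all of `N(v)` precedes `r` if
`v ∈ A`. -/
def IsLeftOf (G : SimpleGraph V) (B : Set V) (ordB : V → ℕ) (r : ℕ) (v : V) : Prop :=
  ∀ b ∈ B, (b = v ∨ G.Adj v b) → ordB b < r

theorem IsBipartitionOf.isLeftOf_iff (hbip : G.IsBipartitionOf A B) {r : ℕ} (hv : v ∈ B) :
    G.IsLeftOf B ordB r v ↔ ordB v < r := by
  refine ⟨fun h => h v hv (Or.inl rfl), fun h b hb => ?_⟩
  rintro (rfl | hvb)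
  · exact h
  · exact absurd hvb (hbip.not_adj_of_mem_B hv hb)

theorem IsLeftOf.of_square_adj (hbip : G.IsBipartitionOf A B)
    (hconv : G.IsConvexityOrder A B ordB) {b₀ : V} (hb₀ : b₀ ∈ B)
    (hu : G.IsLeftOf B ordB (ordB b₀) u) (huv : G.square.Adj u v) (hv₀ : v ≠ b₀)
    (hvb₀ : ¬ G.Adj v b₀) (hfar : ¬ (G.square.Adj u b₀ ∧ G.square.Adj v b₀)) :
    G.IsLeftOf B ordB (ordB b₀) v := by
  intro b hb hvb
  by_contra! hle
  have hlt : ordB b₀ < ordB b := by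
    refine hle.lt_of_ne fun h => ?_
    obtain rfl := hconv.1 hb₀ hb h
    rcases hvb with rfl | h
    exacts [hv₀ rfl, hvb₀ h]
  rcases hbip.1 v with hvA | hvB
  · obtain ⟨b', hb', hvb', hb'₀⟩ : ∃ b' ∈ B, G.Adj v b' ∧ ordB b' < ordB b₀ := by
      rcases hbip.1 u with huA | huB
      · obtain ⟨b', hb', hub', hvb'⟩ := hbip.exists_adj_adj_of_square_adj_of_mem_A huA hvA huv
        exact ⟨b', hb', hvb', hu b' hb' (Or.inr hub')⟩
      · exact ⟨u, huB, (hbip.square_adj_iff_adj hvA huB).mp huv.symm, hu u huB (Or.inl rfl)⟩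
    have hvb : G.Adj v b := hvb.resolve_left fun h => hbip.mem_A_iff_notMem_B.mp hvA (h ▸ hb)
    exact hvb₀ (hconv.2 v hvA b' hb' b₀ hb₀ b hb hvb' hvb hb'₀.le hlt.le)
  · obtain rfl : b = v := hvb.resolve_right (hbip.not_adj_of_mem_B hvB hb)
    rcases hbip.1 u with huA | huB
    · exact (hu b hb (Or.inr ((hbip.square_adj_iff_adj huA hvB).mp huv))).not_ge hlt.le
    · obtain ⟨a, ha, hau, hab⟩ := hbip.exists_adj_adj_of_square_adj_of_mem_B huB hb huv
      have hu₀ : ordB u < ordB b₀ := hu u huB (Or.inl rfl)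
      have hab₀ : G.Adj a b₀ := hconv.2 a ha u huB b₀ hb₀ b hb hau hab hu₀.le hlt.le
      exact hfar ⟨⟨fun h => hu₀.ne (h ▸ rfl), Or.inr ⟨a, hau.symm, hab₀⟩⟩,
        ⟨hv₀, Or.inr ⟨a, hab.symm, hab₀⟩⟩⟩

theorem IsInducedCycleOn.adj_iff {H : SimpleGraph V} (hc : H.IsInducedCycleOn k c)
    (i j : Fin k) :
    H.Adj (c i) (c j) ↔ ((j : ℕ) = i + 1 ∨ i + 1 = k ∧ (j : ℕ) = 0) ∨
      ((i : ℕ) = j + 1 ∨ j + 1 = k ∧ (i : ℕ) = 0) := by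
  rw [hc.2, Nat.eq_add_one_mod_iff i.2 j.2, Nat.eq_add_one_mod_iff j.2 i.2]

theorem IsInducedCycleOn.isABPath (hbip : G.IsBipartitionOf A B)
    (hc : G.square.IsInducedCycleOn k c) (hk : 4 ≤ k) {b b' : Fin k} (hbk : (b : ℕ) = k - 1)
    (hb'k : (b' : ℕ) = k - 2) (hA : ∀ i : Fin k, (i : ℕ) < k - 2 → c i ∈ A)
    (hb : c b ∈ B) (hb' : c b' ∈ B) :
    G.IsABPath A B (k - 2) (fun i => c (Fin.castLE (Nat.sub_le k 2) i)) (c b) (c b') := by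
  refine ⟨by omega, fun i => hA _ i.2, hc.1.comp (Fin.castLE_injective _), fun i j hij => ?_,
    hb, hb', fun h => ?_, fun i => ?_, fun i => ?_⟩
  · rw [hc.adj_iff]
    simp only [Fin.val_castLE]
    omega
  · have := congrArg Fin.val (hc.1 h)
    omega
  all_goals
    rw [← hbip.square_adj_iff_adj (hA _ i.2) (by assumption), hc.adj_iff]
    simp only [Fin.val_castLE]
    omega

section NeZero

variable [NeZero k]

theorem isInducedCycleOn_iff {H : SimpleGraph V} :
    H.IsInducedCycleOn k c ↔
      Function.Injective c ∧ ∀ i j, H.Adj (c i) (c j) ↔ j = i + 1 ∨ i = j + 1 := by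
  have h : ∀ i j : Fin k, j = i + 1 ↔ (j : ℕ) = (i + 1) % k := fun i j => by
    rw [Fin.ext_iff, Fin.val_add, Fin.val_one', Nat.add_mod_mod]
  simp only [IsInducedCycleOn, h]

namespace IsInducedCycleOn

theorem comp_addRight {H : SimpleGraph V} (hc : H.IsInducedCycleOn k c) (t : Fin k) :
    H.IsInducedCycleOn k (c ∘ Equiv.addRight t) := by
  rw [isInducedCycleOn_iff] at hc ⊢
  refine ⟨hc.1.comp (Equiv.injective _), fun i j => ?_⟩
  simp only [Function.comp_apply, Equiv.coe_addRight, hc.2, add_right_comm _ t 1, add_left_inj]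

theorem comp_subLeft {H : SimpleGraph V} (hc : H.IsInducedCycleOn k c) (t : Fin k) :
    H.IsInducedCycleOn k (c ∘ Equiv.subLeft t) := by
  rw [isInducedCycleOn_iff] at hc ⊢
  refine ⟨hc.1.comp (Equiv.injective _), fun i j => ?_⟩
  simp only [Function.comp_apply, Equiv.subLeft_apply, hc.2]
  constructor <;> rintro (h | h) <;> [right; left; right; left] <;> linear_combination h

theorem not_adj_of_adj_sub_one (hc : G.square.IsInducedCycleOn k c) (hk : 4 ≤ k) (t : Fin k)
    {w : V} (hw : G.Adj (c (t - 1)) w) : ¬ G.Adj w (c (t + 1)) := by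
  intro hw'
  have h1 : (1 : Fin k) ≠ 0 := by simp [Fin.ext_iff, Nat.mod_eq_of_lt (show 1 < k by omega)]
  have h2 : (2 : Fin k) ≠ 0 := by simp [Fin.ext_iff, Nat.mod_eq_of_lt (show 2 < k by omega)]
  have h3 : (3 : Fin k) ≠ 0 := by simp [Fin.ext_iff, Nat.mod_eq_of_lt (show 3 < k by omega)]
  have hne : c (t - 1) ≠ c (t + 1) := fun h => h2 (by linear_combination (hc.1 h).symm)
  rcases (isInducedCycleOn_iff.mp hc).2 _ _ |>.mp ⟨hne, Or.inr ⟨w, hw, hw'⟩⟩ with h | h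
  · exact h1 (by linear_combination h)
  · exact h3 (by linear_combination -h)

theorem ordB_lt_of_le (hbip : G.IsBipartitionOf A B) (hconv : G.IsConvexityOrder A B ordB)
    (hc : G.square.IsInducedCycleOn k c) (hk : 4 ≤ k) (h0 : c 0 ∈ B) {i j : Fin k}
    (hij : i ≤ j) (hi : c i ∈ B) (hj : c j ∈ B) (hlt : ordB (c i) < ordB (c 0)) :
    ordB (c j) < ordB (c 0) := by
  have hi0 : (i : ℕ) ≠ 0 := fun h => hlt.ne (by rw [show i = 0 from Fin.ext h])
  have adj0 : ∀ n : Fin k, G.square.Adj (c n) (c 0) ↔ (n : ℕ) = 1 ∨ (n : ℕ) + 1 = k := by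
    intro n
    rw [hc.adj_iff]
    simp only [Fin.val_zero, and_true]
    omega
  -- `c (k - 1)` is adjacent to `c 0` in `G²`, hence in `G` unless it lies in `B`
  suffices ∀ n (hn : n < k), (i : ℕ) ≤ n → (n + 1 < k ∨ c ⟨n, hn⟩ ∈ B) →
      G.IsLeftOf B ordB (ordB (c 0)) (c ⟨n, hn⟩) from
    (hbip.isLeftOf_iff hj).mp (this j j.2 hij (Or.inr hj))
  intro n
  induction n with
  | zero => omega
  | succ n ih =>
    intro hn hin hnB
    rcases hin.eq_or_lt with h | h
    · rw [show (⟨n + 1, hn⟩ : Fin k) = i from Fin.ext h.symm]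
      exact (hbip.isLeftOf_iff hi).mpr hlt
    refine (ih (by omega) (by omega) (Or.inl (by omega))).of_square_adj hbip hconv h0
      ?_ ?_ ?_ ?_
    · exact (hc.adj_iff _ _).mpr (by simp)
    · exact fun h => by simpa [Fin.ext_iff] using hc.1 h
    · intro h
      rcases hnB with hn' | hB
      · have := (adj0 _).mp ⟨G.ne_of_adj h, Or.inl h⟩
        simp only at this
        omega
      · exact hbip.not_adj_of_mem_B hB h0 h
    · rw [adj0, adj0]
      simp only
      omega

theorem ordB_mem_uIcc_zero_one (hbip : G.IsBipartitionOf A B)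
    (hconv : G.IsConvexityOrder A B ordB) (hc : G.square.IsInducedCycleOn k c) (hk : 4 ≤ k)
    (h0 : c 0 ∈ B) (h1 : c 1 ∈ B) {s : Fin k} (hs : c s ∈ B) :
    ordB (c s) ∈ Set.uIcc (ordB (c 0)) (ordB (c 1)) := by
  have h10 : (1 : Fin k) ≠ 0 := by simp [Fin.ext_iff, Nat.mod_eq_of_lt (show 1 < k by omega)]
  wlog hlt : ordB (c 1) < ordB (c 0) generalizing c s
  · have hne : ordB (c 0) ≠ ordB (c 1) := fun h => h10 (hc.1 (hconv.1 h1 h0 h.symm))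
    have := this (hc.comp_subLeft 1) (by simpa using h1) (by simpa using h0) (s := 1 - s)
      (by simpa using hs) (by simpa using lt_of_le_of_ne (not_lt.mp hlt) hne)
    simpa [Set.uIcc_comm] using this
  rcases eq_or_ne s 0 with rfl | hs0
  · exact Set.left_mem_uIcc
  rcases eq_or_ne s 1 with rfl | hs1
  · exact Set.right_mem_uIcc
  have h1s : (1 : Fin k) ≤ s := by
    rw [Fin.le_iff_val_le_val, Fin.val_one', Nat.mod_eq_of_lt (by omega)]
    exact Nat.one_le_iff_ne_zero.mpr (Fin.val_ne_of_ne hs0)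
  refine Set.mem_uIcc.mpr (Or.inr ⟨?_, (hc.ordB_lt_of_le hbip hconv hk h0 h1s h1 hs hlt).le⟩)
  -- otherwise the walk from `c s` forward to `c 0` would stay left of `c 1`
  by_contra! hgt
  have hlast : (⟨k - 1, by omega⟩ : Fin k) + 1 = 0 := Fin.add_one_eq_zero_of_val_eq rfl
  have := (hc.comp_addRight 1).ordB_lt_of_le hbip hconv hk (i := s - 1) (j := ⟨k - 1, by omega⟩)
    (by simpa using h1) (by rw [Fin.le_iff_val_le_val]; have := (s - 1).2; simp only; omega)
    (by simpa using hs) (by simpa [hlast] using h0) (by simpa using hgt)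
  simp only [Function.comp_apply, Equiv.coe_addRight, hlast, zero_add] at this
  exact hlt.not_gt this

theorem ordB_mem_uIcc (hbip : G.IsBipartitionOf A B)
    (hconv : G.IsConvexityOrder A B ordB) (hc : G.square.IsInducedCycleOn k c) (hk : 4 ≤ k)
    {t s : Fin k} (ht : c t ∈ B) (ht1 : c (t + 1) ∈ B) (hs : c s ∈ B) :
    ordB (c s) ∈ Set.uIcc (ordB (c t)) (ordB (c (t + 1))) := by
  simpa [add_comm 1 t] using (hc.comp_addRight t).ordB_mem_uIcc_zero_one hbip hconv hk
    (by simpa using ht) (by simpa [add_comm 1 t] using ht1) (s := s - t) (by simpa using hs)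

theorem eq_of_mem_B (hbip : G.IsBipartitionOf A B) (hconv : G.IsConvexityOrder A B ordB)
    (hc : G.square.IsInducedCycleOn k c) (hk : 4 ≤ k) {t u : Fin k} (ht : c t ∈ B)
    (ht1 : c (t + 1) ∈ B) (hu : c u ∈ B) (hu1 : c (u + 1) ∈ B) : u = t := by
  have hinj : ∀ {x y}, c x ∈ B → c y ∈ B → ordB (c x) = ordB (c y) → x = y :=
    fun hx hy h => hc.1 (hconv.1 hx hy h)
  have h2 : (2 : Fin k) ≠ 0 := by simp [Fin.ext_iff, Nat.mod_eq_of_lt (show 2 < k by omega)]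
  have := hc.ordB_mem_uIcc hbip hconv hk ht ht1 hu
  have := hc.ordB_mem_uIcc hbip hconv hk ht ht1 hu1
  have := hc.ordB_mem_uIcc hbip hconv hk hu hu1 ht
  have := hc.ordB_mem_uIcc hbip hconv hk hu hu1 ht1
  simp only [Set.mem_uIcc] at *
  obtain ⟨h, -⟩ | ⟨h, h'⟩ :
      (ordB (c u) = ordB (c t) ∧ ordB (c (u + 1)) = ordB (c (t + 1))) ∨
      (ordB (c u) = ordB (c (t + 1)) ∧ ordB (c (u + 1)) = ordB (c t)) := by omega
  · exact hinj hu ht h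
  · have e1 := hinj hu ht1 h
    have e2 := hinj hu1 ht h'
    exact absurd (by linear_combination e2 - e1) h2

theorem mem_B_add_one_or_sub_one (hbip : G.IsBipartitionOf A B)
    (hc : G.square.IsInducedCycleOn k c) (hk : 4 ≤ k) {t : Fin k} (ht : c t ∈ B) :
    c (t + 1) ∈ B ∨ c (t - 1) ∈ B := by
  by_contra! h
  have hadj := (isInducedCycleOn_iff.mp hc).2
  refine hc.not_adj_of_adj_sub_one hk t (w := c t) ?_ ?_
  · exact (hbip.square_adj_iff_adj (hbip.mem_A_iff_notMem_B.mpr h.2) ht).mp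
      ((hadj _ _).mpr (Or.inl (sub_add_cancel t 1).symm))
  · exact ((hbip.square_adj_iff_adj (hbip.mem_A_iff_notMem_B.mpr h.1) ht).mp
      ((hadj _ _).mpr (Or.inr rfl))).symm

theorem exists_mem_B (hbip : G.IsBipartitionOf A B) (hconv : G.IsConvexityOrder A B ordB)
    (hc : G.square.IsInducedCycleOn k c) (hk : 4 ≤ k) : ∃ i, c i ∈ B := by
  by_contra! hB
  have hA : ∀ i, c i ∈ A := fun i => hbip.mem_A_iff_notMem_B.mpr (hB i)
  have hadj := (isInducedCycleOn_iff.mp hc).2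
  have nbr : ∀ i, (ordB '' {b | b ∈ B ∧ G.Adj (c i) b}).Nonempty := fun i => by
    obtain ⟨b, hb, hib, -⟩ := hbip.exists_adj_adj_of_square_adj_of_mem_A (hA i) (hA (i + 1))
      ((hadj _ _).mpr (Or.inl rfl))
    exact ⟨ordB b, b, ⟨hb, hib⟩, rfl⟩
  -- pick the vertex whose neighbourhood interval has the rightmost left end
  obtain ⟨t, ht⟩ := Finite.exists_max fun i => sInf (ordB '' {b | b ∈ B ∧ G.Adj (c i) b})
  obtain ⟨b₀, ⟨hb₀, htb₀⟩, hb₀t⟩ := Nat.sInf_mem (nbr t)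
  have key : ∀ j, G.square.Adj (c j) (c t) → G.Adj (c j) b₀ := fun j hj => by
    obtain ⟨b, hb, hjb, htb⟩ := hbip.exists_adj_adj_of_square_adj_of_mem_A (hA j) (hA t) hj
    obtain ⟨b', ⟨hb', hjb'⟩, hb'j⟩ := Nat.sInf_mem (nbr j)
    refine hconv.2 (c j) (hA j) b' hb' b₀ hb₀ b hb hjb' hjb ?_ ?_
    · rw [hb'j, hb₀t]; exact ht j
    · rw [hb₀t]; exact Nat.sInf_le ⟨b, ⟨hb, htb⟩, rfl⟩
  exact hc.not_adj_of_adj_sub_one hk t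
    (key _ ((hadj _ _).mpr (Or.inl (sub_add_cancel t 1).symm)))
    (key _ ((hadj _ _).mpr (Or.inr rfl))).symm

theorem exists_forall_mem_B_iff (hbip : G.IsBipartitionOf A B)
    (hconv : G.IsConvexityOrder A B ordB) (hc : G.square.IsInducedCycleOn k c) (hk : 4 ≤ k) :
    ∃ t, ∀ i, c i ∈ B ↔ i = t ∨ i = t + 1 := by
  obtain ⟨s, hs⟩ := hc.exists_mem_B hbip hconv hk
  obtain ⟨t, ht, ht1⟩ : ∃ t, c t ∈ B ∧ c (t + 1) ∈ B := by
    rcases hc.mem_B_add_one_or_sub_one hbip hk hs with h | h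
    · exact ⟨s, hs, h⟩
    · exact ⟨s - 1, h, by simpa using hs⟩
  refine ⟨t, fun i => ⟨fun hi => ?_, by rintro (rfl | rfl) <;> assumption⟩⟩
  rcases hc.mem_B_add_one_or_sub_one hbip hk hi with h | h
  · exact Or.inl (hc.eq_of_mem_B hbip hconv hk ht ht1 hi h)
  · exact Or.inr (eq_add_of_sub_eq (hc.eq_of_mem_B hbip hconv hk ht ht1 h (by simpa using hi)))

theorem isABPath_comp_subLeft (hbip : G.IsBipartitionOf A B)
    (hc : G.square.IsInducedCycleOn k c) (hk : 4 ≤ k) {t : Fin k}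
    (hB : ∀ i, c i ∈ B ↔ i = t ∨ i = t + 1) {b b' : Fin k}
    (hbk : (b : ℕ) = k - 1) (hb'k : (b' : ℕ) = k - 2) :
    G.IsABPath A B (k - 2) (fun i => c (Equiv.subLeft (t - 1) (Fin.castLE (Nat.sub_le k 2) i)))
      (c (Equiv.subLeft (t - 1) b)) (c (Equiv.subLeft (t - 1) b')) := by
  set d := Equiv.subLeft (t - 1)
  have hlast : b + 1 = 0 := Fin.add_one_eq_zero_of_val_eq hbk
  have hprev : b' + 1 + 1 = 0 := Fin.add_one_eq_zero_of_val_eq <| by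
    rw [Fin.val_add, Fin.val_one', Nat.add_mod_mod, hb'k, Nat.mod_eq_of_lt (by omega)]
    omega
  have hd1 : d b = t := by
    simp only [d, Equiv.subLeft_apply]; linear_combination -hlast
  have hd2 : d b' = t + 1 := by
    simp only [d, Equiv.subLeft_apply]; linear_combination -hprev
  refine (hc.comp_subLeft (t - 1)).isABPath hbip hk hbk hb'k (fun i hi => ?_) ?_ ?_
  · have h1 : d i ≠ t := hd1 ▸ d.injective.ne fun h => by omega
    have h2 : d i ≠ t + 1 := hd2 ▸ d.injective.ne fun h => by omega
    show c (d i) ∈ A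
    rw [hbip.mem_A_iff_notMem_B, hB]
    tauto
  · exact (hB _).mpr (Or.inl hd1)
  · exact (hB _).mpr (Or.inr hd2)

end IsInducedCycleOn

end NeZero

end SimpleGraph

/-- Any induced cycle `C` of length `k ≥ 4` in the square of a convex bipartite graph
`G = (A,B,E)` has exactly `2` vertices in `B` and `k − 2` vertices in `A`; moreover
its vertices can be relabeled as `(v_1, …, v_k)` so that `(v_1, …, v_{k−2})` is an
`(A, v_k, v_{k−1})`-path. -/
theorem induced_cycle_in_square_convex_bipartite {V : Type*} (G : SimpleGraph V)
    (A B : Set V) (ordB : V → ℕ) (hbip : G.IsBipartitionOf A B)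
    (hconv : G.IsConvexityOrder A B ordB)
    (k : ℕ) (hk : 4 ≤ k) (c : Fin k → V) (hc : G.square.IsInducedCycleOn k c) :
    {i : Fin k | c i ∈ B}.ncard = 2 ∧
    {i : Fin k | c i ∈ A}.ncard = k - 2 ∧
    ∃ d : Fin k ≃ Fin k,
      G.square.IsInducedCycleOn k (c ∘ d) ∧
      G.IsABPath A B (k - 2) (fun i => c (d (Fin.castLE (by omega) i)))
        (c (d ⟨k - 1, by omega⟩)) (c (d ⟨k - 2, by omega⟩)) := by
  have : NeZero k := ⟨by omega⟩
  obtain ⟨t, hB⟩ := hc.exists_forall_mem_B_iff hbip hconv hk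
  have hsetB : {i : Fin k | c i ∈ B} = {t, t + 1} := Set.ext hB
  have hsetA : {i : Fin k | c i ∈ A} = {t, t + 1}ᶜ :=
    Set.ext fun i => by simp [hbip.mem_A_iff_notMem_B, hB]
  have hcard : ({t, t + 1} : Set (Fin k)).ncard = 2 :=
    Set.ncard_pair fun h => by simp [Fin.ext_iff, Nat.mod_eq_of_lt (show 1 < k by omega)] at h
  refine ⟨hsetB ▸ hcard, ?_, Equiv.subLeft (t - 1), hc.comp_subLeft _,
    hc.isABPath_comp_subLeft hbip hk hB rfl rfl⟩
  rw [hsetA, Set.ncard_compl, hcard, Nat.card_eq_fintype_card, Fintype.card_fin]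
end
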